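/- arXiv:1504.03133 — 5 statements merged into one kernel-verified Lean document; each statement's English description precedes it below -/
import Mathlib

section
/- For δ ∈ (0, 3/10) and s ≥ 3/4, the approximating potential F_δ satisfies F_δ'(s)·(s − 1/(1−δ)) ≥ F_δ(s)/100. -/
noncomputable def Fdelta (δ s : ℝ) : ℝ :=
  if s < -1 then ((1 - δ) / (2 * δ)) * (s + 1 / (1 - δ))^2
  else if |s| ≤ 1 then -s^2 / 2 + 1 / (2 * (1 - δ))
  else ((1 - δ) / (2 * δ)) * (s - 1 / (1 - δ))^2

noncomputable def Fdelta' (δ s : ℝ) : ℝ :=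
  if s < -1 then ((1 - δ) / δ) * (s + 1 / (1 - δ))
  else if |s| ≤ 1 then -s
  else ((1 - δ) / δ) * (s - 1 / (1 - δ))

theorem stmt_0 (δ : ℝ) (hδ : δ ∈ Set.Ioo (0 : ℝ) (3/10)) (s : ℝ) (hs : 3/4 ≤ s) :
    Fdelta' δ s * (s - 1 / (1 - δ)) ≥ Fdelta δ s / 100 := by
  obtain ⟨hδ0, hδ1⟩ := hδ
  have hδ1' : (0:ℝ) < 1 - δ := by linarith
  have h1 : ¬ s < -1 := by linarith
  rw [Fdelta, Fdelta', if_neg h1, if_neg h1]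
  set a := 1 / (1 - δ) with ha
  have haa : a * (1 - δ) = 1 := by
    rw [ha]; field_simp
  have ha1 : 1 ≤ a := by nlinarith
  by_cases h2 : |s| ≤ 1
  · rw [if_pos h2, if_pos h2]
    have hs1 : s ≤ 1 := (abs_le.mp h2).2
    have h2a : 1 / (2 * (1 - δ)) = a / 2 := by
      rw [ha]; field_simp
    rw [h2a]
    nlinarith [sq_nonneg (s - 1), mul_nonneg (sub_nonneg.mpr hs1) (sub_nonneg.mpr ha1)]
  · rw [if_neg h2, if_neg h2]
    have hc : 0 < (1 - δ) / δ := div_pos hδ1' hδ0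
    have ht := mul_nonneg hc.le (sq_nonneg (s - a))
    have : (1 - δ) / (2 * δ) = ((1 - δ) / δ) / 2 := by
      rw [div_div, mul_comm]
    rw [this]
    nlinarith
end

section
/- For δ ∈ (0, 3/10) and s ≤ −3/4, the approximating potential F_δ satisfies F_δ'(s)·(s + 1/(1−δ)) ≥ F_δ(s)/100. -/
theorem stmt_1 (δ : ℝ) (hδ : δ ∈ Set.Ioo (0 : ℝ) (3/10)) (s : ℝ) (hs : s ≤ -(3/4)) :
    Fdelta' δ s * (s + 1 / (1 - δ)) ≥ Fdelta δ s / 100 := by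
  obtain ⟨h0, h1⟩ := hδ
  have hδ1 : (0:ℝ) < 1 - δ := by linarith
  rw [Fdelta, Fdelta']
  by_cases h : s < -1
  · simp only [if_pos h]
    have key : ((1 - δ) / δ) * (s + 1 / (1 - δ)) * (s + 1 / (1 - δ))
        = 2 * (((1 - δ) / (2 * δ)) * (s + 1 / (1 - δ))^2) := by ring
    rw [key]
    have hnn : 0 ≤ ((1 - δ) / (2 * δ)) * (s + 1 / (1 - δ))^2 :=
      mul_nonneg (by positivity) (sq_nonneg _)
    linarith
  · have hs1 : -1 ≤ s := le_of_not_gt h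
    have habs : |s| ≤ 1 := abs_le.2 ⟨hs1, by linarith⟩
    simp only [if_neg h, if_pos habs]
    have hinv : 1 / (1 - δ) ≤ 10/7 := by
      rw [div_le_div_iff₀ hδ1 (by norm_num)]
      linarith
    have hinv1 : 1 ≤ 1 / (1 - δ) := by
      rw [le_div_iff₀ hδ1]; linarith
    have h2 : 1 / (2 * (1 - δ)) = (1 / (1 - δ)) / 2 := by field_simp
    rw [h2]
    nlinarith [mul_nonneg (by linarith : (0:ℝ) ≤ s + 1) (by linarith : (0:ℝ) ≤ s + 149),
      mul_nonneg (sub_nonneg.2 hinv1) (by linarith : (0:ℝ) ≤ -s - 3/4),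
      mul_nonneg (sub_nonneg.2 hinv1) (by linarith : (0:ℝ) ≤ -s)]
end

section
/- For ε > 0 and δ ∈ (0,1/2), on the region r > ε·arcsin√(1−δ), the function q^{ε,δ}(r) = −(δ/(1−δ))·exp(√((1−δ)/δ)·arcsin√(1−δ))·exp(−(r/ε)·√((1−δ)/δ)) + 1/(1−δ) satisfies ε·(q^{ε,δ}_r(r))²/2 = F_δ(q^{ε,δ}(r))/ε, where on this region 1 < q^{ε,δ}(r) < 1/(1−δ) so that F_δ(q^{ε,δ}) = ((1−δ)/(2δ))·(q^{ε,δ} − 1/(1−δ))². -/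
noncomputable def qprof (ε δ : ℝ) (r : ℝ) : ℝ :=
  if r < -(ε * Real.arcsin (Real.sqrt (1 - δ))) then
    (δ / (1 - δ)) * Real.exp (Real.sqrt ((1 - δ) / δ) * Real.arcsin (Real.sqrt (1 - δ)))
      * Real.exp ((r / ε) * Real.sqrt ((1 - δ) / δ)) - 1 / (1 - δ)
  else if r ≤ ε * Real.arcsin (Real.sqrt (1 - δ)) then
    (1 / Real.sqrt (1 - δ)) * Real.sin (r / ε)
  else
    -(δ / (1 - δ)) * Real.exp (Real.sqrt ((1 - δ) / δ) * Real.arcsin (Real.sqrt (1 - δ)))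
      * Real.exp (-(r / ε) * Real.sqrt ((1 - δ) / δ)) + 1 / (1 - δ)

theorem stmt_5 (ε δ : ℝ) (hε : 0 < ε) (hδ : δ ∈ Set.Ioo (0 : ℝ) (1/2))
    (r : ℝ) (hr : ε * Real.arcsin (Real.sqrt (1 - δ)) < r) :
    (1 < qprof ε δ r ∧ qprof ε δ r < 1 / (1 - δ)) ∧
    ε * (deriv (qprof ε δ) r)^2 / 2 = Fdelta δ (qprof ε δ r) / ε ∧
    Fdelta δ (qprof ε δ r) = ((1 - δ) / (2 * δ)) * (qprof ε δ r - 1 / (1 - δ))^2 := by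
  obtain ⟨hδ0, hδ2⟩ := hδ
  have h1δ : 0 < 1 - δ := by linarith
  set a := Real.arcsin (Real.sqrt (1 - δ)) with ha
  have ha0 : 0 ≤ a := Real.arcsin_nonneg.2 (Real.sqrt_nonneg _)
  set k := Real.sqrt ((1 - δ) / δ) with hk
  have hkpos : 0 < k := Real.sqrt_pos.2 (by positivity)
  have hk2 : k ^ 2 = (1 - δ) / δ := Real.sq_sqrt (by positivity)
  set C := (δ / (1 - δ)) * Real.exp (k * a) with hC
  have hC0 : 0 < C := by positivity
  -- the function on the right branch
  set f : ℝ → ℝ := fun x => -C * Real.exp (-(x / ε) * k) + 1 / (1 - δ) with hf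
  have heq : ∀ x, ε * a < x → qprof ε δ x = f x := by
    intro x hx
    have h1 : ¬ x < -(ε * a) := by nlinarith
    have h2 : ¬ x ≤ ε * a := not_le.2 hx
    simp only [qprof, ← ha, ← hk, if_neg h1, if_neg h2, hf, hC]
    ring
  have hqr : qprof ε δ r = f r := heq r hr
  set E := Real.exp (-(r / ε) * k) with hE
  have hE0 : 0 < E := Real.exp_pos _
  -- bounds
  have hCE : C * E < δ / (1 - δ) := by
    have : C * E = (δ / (1 - δ)) * Real.exp (k * a + -(r / ε) * k) := by
      rw [hC, hE, Real.exp_add]; ring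
    rw [this]
    have hlt : k * a + -(r / ε) * k < 0 := by
      have : a < r / ε := (lt_div_iff₀ hε).2 (by linarith [hr])
      nlinarith
    have := Real.exp_lt_one_iff.2 hlt
    calc (δ / (1 - δ)) * Real.exp (k * a + -(r / ε) * k)
        < (δ / (1 - δ)) * 1 := by
          apply mul_lt_mul_of_pos_left this (by positivity)
      _ = δ / (1 - δ) := mul_one _
  have hqval : qprof ε δ r = 1 / (1 - δ) - C * E := by rw [hqr, hf]; ring
  have hineq : 1 < qprof ε δ r ∧ qprof ε δ r < 1 / (1 - δ) := by
    constructor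
    · rw [hqval]
      have : δ / (1 - δ) = 1 / (1 - δ) - 1 := by field_simp; ring
      linarith [hCE, this ▸ hCE]
    · rw [hqval]; nlinarith
  -- Fdelta value
  have hq1 : 1 < qprof ε δ r := hineq.1
  have hFd : Fdelta δ (qprof ε δ r)
      = ((1 - δ) / (2 * δ)) * (qprof ε δ r - 1 / (1 - δ)) ^ 2 := by
    rw [Fdelta, if_neg (by linarith), if_neg (by rw [abs_le]; push_neg; intro h; linarith)]
  -- derivative
  have hd : HasDerivAt f (C * k / ε * E) r := by
    have h1 : HasDerivAt (fun x : ℝ => -(x / ε) * k) (-(1 / ε) * k) r :=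
      (((hasDerivAt_id r).div_const ε).neg).mul_const k
    have h2 := h1.exp
    have h3 := (h2.const_mul (-C)).add_const (1 / (1 - δ))
    exact h3.congr_deriv (by rw [← hE]; ring)
  have hderiv : deriv (qprof ε δ) r = C * k / ε * E := by
    have hev : qprof ε δ =ᶠ[nhds r] f := by
      filter_upwards [eventually_gt_nhds hr] with x hx using heq x hx
    rw [hev.deriv_eq, hd.deriv]
  refine ⟨hineq, ?_, hFd⟩
  rw [hderiv, hFd, hqval]
  have hδne : δ ≠ 0 := ne_of_gt hδ0
  have h1δne : (1 : ℝ) - δ ≠ 0 := ne_of_gt h1δ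
  have : (1 / (1 - δ) - C * E - 1 / (1 - δ)) ^ 2 = C ^ 2 * E ^ 2 := by ring
  rw [this]
  have hk2' : 1 - δ = k ^ 2 * δ := by
    rw [hk2]; field_simp
  field_simp
  rw [hk2']
end

section
/- Define σ_δ = ∫_{−1/(1−δ)}^{1/(1−δ)} √(2F_δ(s)) ds. Then lim_{δ→0⁺} σ_δ = π/2. -/
noncomputable def sigmaDelta (δ : ℝ) : ℝ :=
  ∫ s in (-(1 / (1 - δ)))..(1 / (1 - δ)), Real.sqrt (2 * Fdelta δ s)

lemma Fdelta_eq_abs (δ s : ℝ) :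
    Fdelta δ s = if |s| ≤ 1 then -s^2 / 2 + 1 / (2 * (1 - δ))
      else ((1 - δ) / (2 * δ)) * (|s| - 1 / (1 - δ))^2 := by
  unfold Fdelta
  rcases lt_or_ge s (-1) with h | h
  · have h1 : ¬ |s| ≤ 1 := by rw [abs_le]; push_neg; intro hs; linarith
    rw [if_pos h, if_neg h1, abs_of_neg (by linarith : s < 0)]; ring
  · rw [if_neg (not_lt.mpr h)]
    by_cases h2 : |s| ≤ 1
    · rw [if_pos h2, if_pos h2]
    · have hs : 0 ≤ s := by
        by_contra hs
        exact h2 (abs_le.mpr ⟨h, by linarith [not_le.mp hs]⟩)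
      rw [if_neg h2, if_neg h2, abs_of_nonneg hs]

lemma cont_sqrtF {δ : ℝ} (hδ0 : 0 < δ) (hδ1 : δ < 1) :
    Continuous (fun s => Real.sqrt (2 * Fdelta δ s)) := by
  have hne : (1 : ℝ) - δ ≠ 0 := by linarith
  have hF : Continuous (fun s => Fdelta δ s) := by
    have : (fun s : ℝ => Fdelta δ s) = fun s =>
        if |s| ≤ 1 then -s^2 / 2 + 1 / (2 * (1 - δ))
        else ((1 - δ) / (2 * δ)) * (|s| - 1 / (1 - δ))^2 :=
      funext fun s => Fdelta_eq_abs δ s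
    rw [this]
    apply Continuous.if_le
    · continuity
    · continuity
    · exact continuous_abs
    · exact continuous_const
    · intro s hs
      have hs2 : s ^ 2 = 1 := by
        have := sq_abs s
        rw [hs] at this; linarith [this]
      rw [hs, hs2]
      field_simp
      ring
  exact (Real.continuous_sqrt).comp (continuous_const.mul hF)

lemma int_circle (a : ℝ) (ha : 0 < a) :
    ∫ s in (-a)..a, Real.sqrt (a^2 - s^2) = a^2 * (Real.pi / 2) := by
  have h := intervalIntegral.integral_comp_mul_left
    (a := -1) (b := 1) (f := fun x => Real.sqrt (a^2 - x^2)) (c := a) ha.ne'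
  simp only [mul_neg_one, mul_one, smul_eq_mul] at h
  have h2 : ∀ x : ℝ, Real.sqrt (a^2 - (a*x)^2) = a * Real.sqrt (1 - x^2) := fun x => by
    rw [show a^2 - (a*x)^2 = a^2 * (1 - x^2) by ring, Real.sqrt_mul (sq_nonneg a),
      Real.sqrt_sq ha.le]
  simp only [h2] at h
  rw [intervalIntegral.integral_const_mul, integral_sqrt_one_sub_sq] at h
  have ha' : a ≠ 0 := ha.ne'
  field_simp at h
  nlinarith [h]

lemma sigma_bounds {δ : ℝ} (hδ0 : 0 < δ) (hδ1 : δ < 1) :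
    Real.pi / 2 ≤ sigmaDelta δ ∧ sigmaDelta δ ≤ (1 / (1 - δ))^2 * (Real.pi / 2) := by
  have h1δ : (0:ℝ) < 1 - δ := by linarith
  set a : ℝ := 1 / (1 - δ) with ha_def
  have ha1 : 1 ≤ a := by rw [ha_def, le_div_iff₀ h1δ]; linarith
  have ha0 : 0 < a := by linarith
  have haδ : a * (1 - δ) = 1 := by rw [ha_def]; field_simp
  have hcont := cont_sqrtF hδ0 hδ1
  have hint : IntervalIntegrable (fun s => Real.sqrt (2 * Fdelta δ s)) MeasureTheory.volume (-a) a :=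
    hcont.intervalIntegrable _ _
  have hint1 : IntervalIntegrable (fun s => Real.sqrt (2 * Fdelta δ s)) MeasureTheory.volume (-1) 1 :=
    hcont.intervalIntegrable _ _
  constructor
  · -- lower bound
    have step1 : ∫ s in (-1:ℝ)..1, Real.sqrt (1 - s^2) ≤
        ∫ s in (-1:ℝ)..1, Real.sqrt (2 * Fdelta δ s) := by
      apply intervalIntegral.integral_mono_on (by norm_num)
        ((by continuity : Continuous fun s : ℝ => Real.sqrt (1 - s^2)).intervalIntegrable _ _) hint1
      intro s hs
      have habs : |s| ≤ 1 := abs_le.mpr ⟨hs.1, hs.2⟩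
      apply Real.sqrt_le_sqrt
      rw [Fdelta_eq_abs, if_pos habs]
      have h2 : 2 * (-s ^ 2 / 2 + 1 / (2 * (1 - δ))) = 1/(1-δ) - s^2 := by
        field_simp <;> ring
      rw [h2]
      have h3 : (1:ℝ) ≤ 1/(1-δ) := ha1
      linarith
    have step2 : ∫ s in (-1:ℝ)..1, Real.sqrt (2 * Fdelta δ s) ≤ sigmaDelta δ := by
      apply intervalIntegral.integral_mono_interval (by linarith) (by norm_num) ha1
        (Filter.Eventually.of_forall fun x => Real.sqrt_nonneg _) hint
    calc Real.pi / 2 = ∫ s in (-1:ℝ)..1, Real.sqrt (1 - s^2) := by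
            rw [← integral_sqrt_one_sub_sq]
      _ ≤ _ := le_trans step1 step2
  · -- upper bound
    have key : ∀ s ∈ Set.Icc (-a) a, Real.sqrt (2 * Fdelta δ s) ≤ Real.sqrt (a^2 - s^2) := by
      intro s hs
      apply Real.sqrt_le_sqrt
      rw [Fdelta_eq_abs]
      have hsa : |s| ≤ a := abs_le.mpr ⟨hs.1, hs.2⟩
      by_cases habs : |s| ≤ 1
      · rw [if_pos habs]
        have h2 : 2 * (-s ^ 2 / 2 + 1 / (2 * (1 - δ))) = 1/(1-δ) - s^2 := by
          field_simp <;> ring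
        rw [h2, ← ha_def]
        nlinarith
      · rw [if_neg habs]
        push_neg at habs
        set t := |s| with ht_def
        have hta : t ≤ a := hsa
        have hs2 : s^2 = t^2 := (sq_abs s).symm
        rw [hs2]
        have key2 : (1 - δ) * (a - t) ≤ δ := by
          nlinarith [mul_pos h1δ (by linarith : (0:ℝ) < t - 1)]
        have h1 : 2 * ((1 - δ) / (2 * δ) * (t - a) ^ 2) = (1 - δ) * (a - t)^2 / δ := by
          field_simp; ring
        rw [h1, div_le_iff₀ hδ0]
        nlinarith [mul_nonneg (sub_nonneg.mpr hta) (sub_nonneg.mpr key2),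
          mul_nonneg (mul_nonneg hδ0.le (sub_nonneg.mpr hta)) (by linarith : (0:ℝ) ≤ a + t - 1)]
    have hmono : sigmaDelta δ ≤ ∫ s in (-a)..a, Real.sqrt (a^2 - s^2) := by
      apply intervalIntegral.integral_mono_on (by linarith) hint
        ((by continuity : Continuous fun s : ℝ => Real.sqrt (a^2 - s^2)).intervalIntegrable _ _)
        key
    calc sigmaDelta δ ≤ ∫ s in (-a)..a, Real.sqrt (a^2 - s^2) := hmono
      _ = a^2 * (Real.pi / 2) := int_circle a ha0

theorem stmt_7 :
    Filter.Tendsto sigmaDelta (nhdsWithin 0 (Set.Ioi 0)) (nhds (Real.pi / 2)) := by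
  have hev : ∀ᶠ δ in nhdsWithin (0:ℝ) (Set.Ioi 0), δ ∈ Set.Ioo (0:ℝ) 1 := by
    apply Filter.eventually_iff_exists_mem.mpr
    exact ⟨Set.Ioo 0 1, Ioo_mem_nhdsGT_of_mem (by norm_num), fun x hx => hx⟩
  apply tendsto_of_tendsto_of_tendsto_of_le_of_le'
    (g := fun _ : ℝ => Real.pi / 2) (h := fun δ : ℝ => (1 / (1 - δ))^2 * (Real.pi / 2))
  · exact tendsto_const_nhds
  · have h1 : Filter.Tendsto (fun δ : ℝ => 1 - δ) (nhdsWithin 0 (Set.Ioi 0)) (nhds 1) := by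
      have : Filter.Tendsto (fun δ : ℝ => 1 - δ) (nhds 0) (nhds (1 - 0)) :=
        (continuous_const.sub continuous_id).tendsto 0
      simpa using this.mono_left nhdsWithin_le_nhds
    simpa [one_div] using ((h1.inv₀ one_ne_zero).pow 2).mul_const (Real.pi / 2)
  · exact hev.mono fun δ hδ => (sigma_bounds hδ.1 hδ.2).1
  · exact hev.mono fun δ hδ => (sigma_bounds hδ.1 hδ.2).2
end

section
/- Let γ > 0, let Z ⊂ ℝⁿ × [t₀−τ, t₀+τ] be a set with the separation property: for any two distinct points (x,t), (x',t') ∈ Z, either |t'−t| > 2τ or |x'−x| > γ·√|t'−t| (equivalently, P_{2τ}(x,t) ∩ Z = {(x,t)} where P_{2τ}(x,t) = {(x',t') : 2τ ≥ |t'−t| ≥ |x'−x|²/γ²}), and suppose Z ⊂ B₁(x₀) × [t₀−τ, t₀+τ]. Then for every a > 0, the time-slice sets Z_t = {x : (x,t) ∈ Z} satisfy ∫_{t₀−τ}^{t₀+τ} H^{n−2+a}(Z_t) dt = 0; in particular H^{n−2+a}(Z_t) = 0 for a.e. t. -/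
open Set MeasureTheory Metric Filter
open scoped ENNReal NNReal Topology

set_option maxHeartbeats 1000000

lemma stmt19_net {n : ℕ} (x₀ : EuclideanSpace ℝ (Fin n)) {δ : ℝ} (hδ : 0 < δ) (hδ1 : δ ≤ 1)
    (X : Set (EuclideanSpace ℝ (Fin n))) (hX : X ⊆ ball x₀ 1) :
    ∃ (N : ℕ) (c : Fin N → EuclideanSpace ℝ (Fin n)),
      (∀ i, c i ∈ X) ∧ (∀ x ∈ X, ∃ i, dist x (c i) < δ) ∧
      (N : ℝ≥0∞) ≤ ENNReal.ofReal ((4 / δ) ^ n) := by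
  classical
  -- maximal δ-separated subset of X
  set 𝒞 : Set (Set (EuclideanSpace ℝ (Fin n))) := {S | S ⊆ X ∧ ∀ x ∈ S, ∀ y ∈ S, x ≠ y → δ ≤ dist x y} with h𝒞
  obtain ⟨S, hSmax⟩ : ∃ S, Maximal (· ∈ 𝒞) S := by
    apply zorn_subset
    intro c hc hchain
    refine ⟨⋃₀ c, ⟨?_, ?_⟩, fun s hs => subset_sUnion_of_mem hs⟩
    · exact sUnion_subset fun s hs => (hc hs).1
    · rintro x ⟨s, hs, hxs⟩ y ⟨t, ht, hyt⟩ hxy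
      rcases hchain.total hs ht with h | h
      · exact (hc ht).2 x (h hxs) y hyt hxy
      · exact (hc hs).2 x hxs y (h hyt) hxy
  have hSX : S ⊆ X := hSmax.1.1
  have hSsep : ∀ x ∈ S, ∀ y ∈ S, x ≠ y → δ ≤ dist x y := hSmax.1.2
  -- maximality: every point of X is within δ of S
  have hcov : ∀ x ∈ X, ∃ c ∈ S, dist x c < δ := by
    intro x hx
    by_contra h
    push_neg at h
    have hxS : x ∉ S := fun hxS => by have := h x hxS; rw [dist_self] at this; linarith
    have : insert x S ∈ 𝒞 := by
      constructor
      · exact insert_subset hx hSX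
      · intro y hy z hz hyz
        rcases hy with rfl | hy
        · rcases hz with rfl | hz
          · exact absurd rfl hyz
          · exact dist_comm z y ▸ h z hz
        · rcases hz with rfl | hz
          · have := h y hy; rwa [dist_comm] at this
          · exact hSsep y hy z hz hyz
    have := hSmax.2 this (subset_insert x S)
    exact hxS (this (mem_insert x S))
  -- S is finite
  have hSfin : S.Finite := by
    have hc : IsCompact (closedBall x₀ 1) := isCompact_closedBall x₀ 1
    obtain ⟨F, hFfin, hFcov⟩ := totallyBounded_iff.1 hc.totallyBounded (δ / 2) (by linarith)
    have : S ⊆ ⋃ y ∈ F, (S ∩ ball y (δ / 2)) := by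
      intro x hx
      have hx' : x ∈ closedBall x₀ 1 := ball_subset_closedBall (hX (hSX hx))
      obtain ⟨y, hy, hxy⟩ := mem_iUnion₂.1 (hFcov hx')
      exact mem_iUnion₂.2 ⟨y, hy, hx, hxy⟩
    refine Set.Finite.subset (Set.Finite.biUnion hFfin fun y _ => ?_) this
    apply Set.Subsingleton.finite
    intro u hu v hv
    by_contra huv
    have := hSsep u hu.1 v hv.1 huv
    have : dist u v < δ := by
      have h1 := mem_ball.1 hu.2
      have h2 := mem_ball.1 hv.2
      calc dist u v ≤ dist u y + dist y v := dist_triangle u y v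
        _ < δ / 2 + δ / 2 := by rw [dist_comm y v]; exact add_lt_add h1 h2
        _ = δ := by ring
    linarith
  -- volume counting
  set v : ℝ≥0∞ := volume (ball (0 : EuclideanSpace ℝ (Fin n)) 1) with hv
  have hv0 : v ≠ 0 := (measure_ball_pos volume 0 one_pos).ne'
  have hvtop : v ≠ ⊤ := measure_ball_lt_top.ne
  have hdisj : (hSfin.toFinset : Set (EuclideanSpace ℝ (Fin n))).Pairwise
      (Function.onFun Disjoint fun c => ball c (δ / 2)) := by
    intro u hu w hw huw
    apply ball_disjoint_ball
    have := hSsep u (hSfin.mem_toFinset.1 hu) w (hSfin.mem_toFinset.1 hw) huw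
    linarith
  have hmeas : ∀ c ∈ hSfin.toFinset, MeasurableSet (ball c (δ / 2)) :=
    fun c _ => measurableSet_ball
  have hunion : (⋃ c ∈ hSfin.toFinset, ball c (δ / 2)) ⊆ ball x₀ 2 := by
    intro x hx
    obtain ⟨c, hc, hxc⟩ := mem_iUnion₂.1 hx
    have hcX : c ∈ ball x₀ 1 := hX (hSX (hSfin.mem_toFinset.1 hc))
    have := mem_ball.1 hxc
    have := mem_ball.1 hcX
    have : dist x x₀ ≤ dist x c + dist c x₀ := dist_triangle x c x₀
    rw [mem_ball]
    linarith
  have hball : ∀ c : EuclideanSpace ℝ (Fin n), volume (ball c (δ / 2)) =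
      ENNReal.ofReal ((δ / 2) ^ n) * v := by
    intro c
    rw [hv, Measure.addHaar_ball_of_pos volume c (by linarith)]
    congr 2
    simp [finrank_euclideanSpace_fin]
  have hcount : (hSfin.toFinset.card : ℝ≥0∞) * (ENNReal.ofReal ((δ / 2) ^ n) * v)
      ≤ ENNReal.ofReal (2 ^ n) * v := by
    calc (hSfin.toFinset.card : ℝ≥0∞) * (ENNReal.ofReal ((δ / 2) ^ n) * v)
        = ∑ c ∈ hSfin.toFinset, volume (ball c (δ / 2)) := by
          rw [Finset.sum_congr rfl fun c _ => hball c, Finset.sum_const, nsmul_eq_mul]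
      _ = volume (⋃ c ∈ hSfin.toFinset, ball c (δ / 2)) :=
          (measure_biUnion_finset hdisj hmeas).symm
      _ ≤ volume (ball x₀ 2) := measure_mono hunion
      _ = ENNReal.ofReal (2 ^ n) * v := by
          rw [hv, Measure.addHaar_ball_of_pos volume x₀ two_pos]
          congr 2
          simp [finrank_euclideanSpace_fin]
  have hcard : (hSfin.toFinset.card : ℝ≥0∞) ≤ ENNReal.ofReal ((4 / δ) ^ n) := by
    have h2 : (ENNReal.ofReal ((δ / 2) ^ n) * v) ≠ 0 := by
      apply mul_ne_zero _ hv0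
      simp only [ne_eq, ENNReal.ofReal_eq_zero, not_le]
      positivity
    have h3 : (ENNReal.ofReal ((δ / 2) ^ n) * v) ≠ ⊤ :=
      ENNReal.mul_ne_top ENNReal.ofReal_ne_top hvtop
    rw [← ENNReal.le_div_iff_mul_le (Or.inl h2) (Or.inl h3)] at hcount
    refine hcount.trans (le_of_eq ?_)
    rw [ENNReal.mul_div_mul_right _ _ hv0 hvtop]
    rw [← ENNReal.ofReal_div_of_pos (by positivity)]
    congr 1
    rw [← div_pow]
    congr 1
    field_simp
    norm_num
  -- convert to Fin N
  set N := hSfin.toFinset.card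
  refine ⟨N, fun i => ((hSfin.toFinset.equivFin.symm i : hSfin.toFinset) : EuclideanSpace ℝ (Fin n)), ?_, ?_, hcard⟩
  · intro i
    exact hSX (hSfin.mem_toFinset.1 (hSfin.toFinset.equivFin.symm i).2)
  · intro x hx
    obtain ⟨c, hcS, hxc⟩ := hcov x hx
    refine ⟨hSfin.toFinset.equivFin ⟨c, hSfin.mem_toFinset.2 hcS⟩, ?_⟩
    simpa using hxc

theorem stmt_19 (n : ℕ) (γ τ a t₀ : ℝ) (hγ : 0 < γ) (hτ : 0 < τ) (ha : 0 < a)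
    (x₀ : EuclideanSpace ℝ (Fin n))
    (Z : Set ((EuclideanSpace ℝ (Fin n)) × ℝ))
    (hZsub : Z ⊆ (ball x₀ 1) ×ˢ (Icc (t₀ - τ) (t₀ + τ)))
    -- separation property: each point of Z is alone in its parabolic region
    (hsep : ∀ p ∈ Z, ∀ q ∈ Z, p ≠ q →
      2 * τ < |q.2 - p.2| ∨ γ * Real.sqrt |q.2 - p.2| < dist q.1 p.1) :
    (∫⁻ t in Icc (t₀ - τ) (t₀ + τ), μH[(n : ℝ) - 2 + a] {x | (x, t) ∈ Z}) = 0 ∧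
    ∀ᵐ t ∂(volume.restrict (Icc (t₀ - τ) (t₀ + τ))),
      μH[(n : ℝ) - 2 + a] {x | (x, t) ∈ Z} = 0 := by
  classical
  set s : ℝ := (n : ℝ) - 2 + a with hs
  set I : Set ℝ := Icc (t₀ - τ) (t₀ + τ) with hI
  set ν : Measure ℝ := volume.restrict I with hν
  suffices hae : ∀ᵐ t ∂ν, μH[s] {x | (x, t) ∈ Z} = 0 by
    refine ⟨?_, hae⟩
    calc ∫⁻ t in I, μH[s] {x | (x, t) ∈ Z} = ∫⁻ _ in I, 0 := lintegral_congr_ae hae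
      _ = 0 := lintegral_zero
  -- quadratic time control
  have hq : ∀ p ∈ Z, ∀ q ∈ Z, |q.2 - p.2| ≤ (dist q.1 p.1) ^ 2 / γ ^ 2 := by
    intro p hp q hqZ
    by_cases hpq : p = q
    · subst hpq; simp
    · rcases hsep p hp q hqZ hpq with h | h
      · exfalso
        have h1 := (hZsub hp).2
        have h2 := (hZsub hqZ).2
        rw [mem_Icc] at h1 h2
        have : |q.2 - p.2| ≤ 2 * τ := abs_le.2 ⟨by linarith, by linarith⟩
        linarith
      · have h0 : Real.sqrt |q.2 - p.2| < dist q.1 p.1 / γ := (lt_div_iff₀' hγ).2 h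
        calc |q.2 - p.2| = Real.sqrt |q.2 - p.2| ^ 2 := (Real.sq_sqrt (abs_nonneg _)).symm
          _ ≤ (dist q.1 p.1 / γ) ^ 2 := pow_le_pow_left₀ (Real.sqrt_nonneg _) h0.le 2
          _ = (dist q.1 p.1) ^ 2 / γ ^ 2 := div_pow _ _ 2
  have hXsub : (Prod.fst '' Z) ⊆ ball x₀ 1 := by
    rintro x ⟨p, hp, rfl⟩; exact (hZsub hp).1
  -- nets at scales δ k
  set δ : ℕ → ℝ := fun k => 1 / (k + 1) with hδdef
  have hδpos : ∀ k, 0 < δ k := fun k => by positivity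
  have hδ1 : ∀ k, δ k ≤ 1 := by
    intro k
    rw [hδdef]
    rw [div_le_one (by positivity)]
    simp
  have hδ0 : Tendsto δ atTop (𝓝 0) := tendsto_one_div_add_atTop_nhds_zero_nat
  choose N c hcX hccov hcard using fun k =>
    stmt19_net x₀ (hδpos k) (hδ1 k) (Prod.fst '' Z) hXsub
  have hcts : ∀ k i, ∃ t, (c k i, t) ∈ Z := by
    intro k i
    obtain ⟨p, hp, hp1⟩ := hcX k i
    exact ⟨p.2, by rwa [← hp1, Prod.mk.eta]⟩
  choose ts hts using hcts
  set J : ∀ k, Fin (N k) → Set ℝ :=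
    fun k i => Icc (ts k i - (δ k) ^ 2 / γ ^ 2) (ts k i + (δ k) ^ 2 / γ ^ 2) with hJdef
  have hkey : ∀ x t, (x, t) ∈ Z → ∀ k, ∃ i, x ∈ ball (c k i) (δ k) ∧ t ∈ J k i := by
    intro x t hxt k
    obtain ⟨i, hi⟩ := hccov k x ⟨(x, t), hxt, rfl⟩
    refine ⟨i, mem_ball.2 hi, ?_⟩
    have h1 := hq (c k i, ts k i) (hts k i) (x, t) hxt
    have h2 : dist x (c k i) ^ 2 ≤ (δ k) ^ 2 := by
      apply pow_le_pow_left₀ dist_nonneg hi.le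
    have h3 : |t - ts k i| ≤ (δ k) ^ 2 / γ ^ 2 := by
      refine h1.trans ?_
      gcongr
    rw [abs_le] at h3
    rw [hJdef, mem_Icc]
    exact ⟨by linarith [h3.1], by linarith [h3.2]⟩
  have hvolJ : ∀ k i, volume (J k i) = ENNReal.ofReal (2 * (δ k) ^ 2 / γ ^ 2) := by
    intro k i
    rw [hJdef, Real.volume_Icc]
    congr 1
    ring
  rcases le_or_gt n 1 with hn | hn
  · -- low-dimensional case: the set of occupied times is null
    set T : Set ℝ := {t | ∃ x, (x, t) ∈ Z} with hT
    have hTk : ∀ k, volume T ≤ ENNReal.ofReal (8 / γ ^ 2 * δ k) := by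
      intro k
      have hsub : T ⊆ ⋃ i, J k i := by
        rintro t ⟨x, hxt⟩
        obtain ⟨i, _, hJ⟩ := hkey x t hxt k
        exact mem_iUnion.2 ⟨i, hJ⟩
      calc volume T ≤ volume (⋃ i, J k i) := measure_mono hsub
        _ ≤ ∑ i, volume (J k i) := measure_iUnion_fintype_le _ _
        _ = (N k : ℝ≥0∞) * ENNReal.ofReal (2 * (δ k) ^ 2 / γ ^ 2) := by
            rw [Finset.sum_congr rfl fun i _ => hvolJ k i, Finset.sum_const, nsmul_eq_mul]
            simp
        _ ≤ ENNReal.ofReal ((4 / δ k) ^ n) * ENNReal.ofReal (2 * (δ k) ^ 2 / γ ^ 2) :=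
            mul_le_mul_left (hcard k) _
        _ = ENNReal.ofReal ((4 / δ k) ^ n * (2 * (δ k) ^ 2 / γ ^ 2)) :=
            (ENNReal.ofReal_mul (by positivity)).symm
        _ ≤ ENNReal.ofReal (8 / γ ^ 2 * δ k) := by
            apply ENNReal.ofReal_le_ofReal
            have h1 : (4 / δ k) ^ n ≤ 4 / δ k := by
              have h4 : (1 : ℝ) ≤ 4 / δ k := by
                rw [le_div_iff₀ (hδpos k)]
                linarith [hδ1 k]
              calc (4 / δ k) ^ n ≤ (4 / δ k) ^ 1 := pow_le_pow_right₀ h4 hn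
                _ = 4 / δ k := pow_one _
            calc (4 / δ k) ^ n * (2 * (δ k) ^ 2 / γ ^ 2)
                ≤ (4 / δ k) * (2 * (δ k) ^ 2 / γ ^ 2) := by
                  apply mul_le_mul_of_nonneg_right h1 (by positivity)
              _ = 8 / γ ^ 2 * δ k := by
                  field_simp
                  ring
    have htend : Tendsto (fun k => ENNReal.ofReal (8 / γ ^ 2 * δ k)) atTop (𝓝 0) := by
      have : Tendsto (fun k => 8 / γ ^ 2 * δ k) atTop (𝓝 0) := by
        have h := hδ0.const_mul (8 / γ ^ 2); rwa [mul_zero] at h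
      simpa using ENNReal.tendsto_ofReal this
    have hT0 : volume T = 0 := le_antisymm (ge_of_tendsto' htend hTk) zero_le
    have hT0' : ν T = 0 := Measure.absolutelyContinuous_of_le Measure.restrict_le_self hT0
    filter_upwards [measure_eq_zero_iff_ae_notMem.1 hT0'] with t ht
    have hempty : {x | (x, t) ∈ Z} = ∅ :=
      eq_empty_iff_forall_notMem.2 fun x hx => ht ⟨x, hx⟩
    rw [hempty]
    exact measure_empty
  · -- main case n ≥ 2, s > 0
    have hn2 : (2 : ℝ) ≤ (n : ℝ) := by exact_mod_cast hn
    have hspos : 0 < s := by rw [hs]; linarith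
    set g : ℕ → ℝ → ℝ≥0∞ := fun k t =>
      ∑ i : Fin (N k), (J k i).indicator (fun _ => ENNReal.ofReal (2 * δ k) ^ s) t with hg
    have hgmeas : ∀ k, Measurable (g k) := by
      intro k
      apply Finset.measurable_sum
      intro i _
      exact measurable_const.indicator measurableSet_Icc
    set L : ℝ → ℝ≥0∞ := fun t => liminf (fun k => g k t) atTop with hL
    have hdiam : ∀ (x : EuclideanSpace ℝ (Fin n)) (r : ℝ), 0 ≤ r →
        EMetric.diam (ball x r) ≤ ENNReal.ofReal (2 * r) := by
      intro x r hr
      rw [← Metric.emetric_ball]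
      refine EMetric.diam_ball.trans (le_of_eq ?_)
      rw [ENNReal.ofReal_mul (by norm_num)]
      norm_num
    have hFL : ∀ t, μH[s] {x | (x, t) ∈ Z} ≤ L t := by
      intro t
      have hr : Tendsto (fun k => ENNReal.ofReal (2 * δ k)) atTop (𝓝 0) := by
        have : Tendsto (fun k => 2 * δ k) atTop (𝓝 0) := by
          have h := hδ0.const_mul (2 : ℝ); rwa [mul_zero] at h
        simpa using ENNReal.tendsto_ofReal this
      have hle := Measure.hausdorffMeasure_le_liminf_sum s {x | (x, t) ∈ Z}
        (fun k => ENNReal.ofReal (2 * δ k)) hr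
        (fun k i => if t ∈ J k i then ball (c k i) (δ k) else ∅)
        (Eventually.of_forall fun k => by
          intro i
          split_ifs
          · exact hdiam _ _ (hδpos k).le
          · simp)
        (Eventually.of_forall fun k => by
          intro x hx
          obtain ⟨i, hball, hJ⟩ := hkey x t hx k
          exact mem_iUnion.2 ⟨i, by simpa [hJ] using hball⟩)
      refine hle.trans (liminf_le_liminf (Eventually.of_forall fun k => ?_))
      apply Finset.sum_le_sum
      intro i _
      by_cases hti : t ∈ J k i
      · simp only [if_pos hti, indicator_of_mem hti]
        exact ENNReal.rpow_le_rpow (hdiam _ _ (hδpos k).le) hspos.le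
      · simp only [if_neg hti, indicator_of_notMem hti, EMetric.diam_empty,
          ENNReal.zero_rpow_of_pos hspos]
        exact zero_le
    have hLmeas : Measurable L := Measurable.liminf hgmeas
    -- bound on the integrals
    have hreal : ∀ k, (4 / δ k) ^ n * ((2 * δ k) ^ s * (2 * (δ k) ^ 2 / γ ^ 2))
        = (4 ^ n * 2 ^ s * 2 / γ ^ 2) * (δ k) ^ a := by
      intro k
      have hδk := hδpos k
      have h1 : (2 * δ k) ^ s = 2 ^ s * (δ k) ^ s := Real.mul_rpow (by norm_num) hδk.le
      have h2 : (δ k) ^ s * (δ k : ℝ) ^ (2 : ℕ) = (δ k) ^ (n : ℕ) * (δ k) ^ a := by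
        rw [← Real.rpow_natCast (δ k) 2, ← Real.rpow_natCast (δ k) n,
          ← Real.rpow_add hδk, ← Real.rpow_add hδk]
        congr 1
        rw [hs]
        push_cast
        ring
      have hδn : (δ k : ℝ) ^ (n : ℕ) ≠ 0 := pow_ne_zero _ hδk.ne'
      calc (4 / δ k) ^ n * ((2 * δ k) ^ s * (2 * (δ k) ^ 2 / γ ^ 2))
          = (4 ^ n * 2 ^ s * 2 / γ ^ 2) * ((δ k) ^ s * (δ k) ^ (2 : ℕ) / (δ k) ^ (n : ℕ)) := by
            rw [h1, div_pow]
            ring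
        _ = (4 ^ n * 2 ^ s * 2 / γ ^ 2) * (δ k) ^ a := by
            rw [h2]
            field_simp
    have hint : ∀ k, (∫⁻ t, g k t ∂ν)
        ≤ ENNReal.ofReal ((4 ^ n * 2 ^ s * 2 / γ ^ 2) * (δ k) ^ a) := by
      intro k
      have heach : ∀ i : Fin (N k), (∫⁻ t, (J k i).indicator
          (fun _ => ENNReal.ofReal (2 * δ k) ^ s) t ∂ν)
          ≤ ENNReal.ofReal (2 * δ k) ^ s * ENNReal.ofReal (2 * (δ k) ^ 2 / γ ^ 2) := by
        intro i
        rw [lintegral_indicator_const measurableSet_Icc]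
        apply mul_le_mul_right
        calc ν (J k i) ≤ volume (J k i) := by
              rw [hν, Measure.restrict_apply measurableSet_Icc]
              exact measure_mono inter_subset_left
          _ = ENNReal.ofReal (2 * (δ k) ^ 2 / γ ^ 2) := hvolJ k i
      calc (∫⁻ t, g k t ∂ν)
          = ∑ i : Fin (N k), ∫⁻ t, (J k i).indicator
              (fun _ => ENNReal.ofReal (2 * δ k) ^ s) t ∂ν := by
            rw [hg]
            exact lintegral_finset_sum _ fun i _ =>
              measurable_const.indicator measurableSet_Icc
        _ ≤ ∑ _i : Fin (N k), ENNReal.ofReal (2 * δ k) ^ s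
              * ENNReal.ofReal (2 * (δ k) ^ 2 / γ ^ 2) :=
            Finset.sum_le_sum fun i _ => heach i
        _ = (N k : ℝ≥0∞) * (ENNReal.ofReal (2 * δ k) ^ s
              * ENNReal.ofReal (2 * (δ k) ^ 2 / γ ^ 2)) := by
            rw [Finset.sum_const, nsmul_eq_mul]
            simp
        _ ≤ ENNReal.ofReal ((4 / δ k) ^ n) * (ENNReal.ofReal (2 * δ k) ^ s
              * ENNReal.ofReal (2 * (δ k) ^ 2 / γ ^ 2)) :=
            mul_le_mul_left (hcard k) _
        _ = ENNReal.ofReal ((4 / δ k) ^ n * ((2 * δ k) ^ s * (2 * (δ k) ^ 2 / γ ^ 2))) := by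
            rw [ENNReal.ofReal_rpow_of_pos (by positivity)]
            rw [← ENNReal.ofReal_mul (by positivity), ← ENNReal.ofReal_mul (by positivity)]
        _ = ENNReal.ofReal ((4 ^ n * 2 ^ s * 2 / γ ^ 2) * (δ k) ^ a) := by rw [hreal k]
    have hbound0 : Tendsto
        (fun k => ENNReal.ofReal ((4 ^ n * 2 ^ s * 2 / γ ^ 2) * (δ k) ^ a)) atTop (𝓝 0) := by
      have h1 : Tendsto (fun k => (δ k) ^ a) atTop (𝓝 0) := by
        have hcont := Real.continuousAt_rpow_const 0 a (Or.inr ha.le)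
        have := hcont.tendsto.comp hδ0
        simpa [Real.zero_rpow ha.ne', Function.comp_def] using this
      have h2 : Tendsto (fun k => (4 ^ n * 2 ^ s * 2 / γ ^ 2) * (δ k) ^ a) atTop (𝓝 0) := by
        have h := h1.const_mul (4 ^ n * 2 ^ s * 2 / γ ^ 2); rwa [mul_zero] at h
      simpa using ENNReal.tendsto_ofReal h2
    have hIL : (∫⁻ t, L t ∂ν) = 0 := by
      refine le_antisymm ?_ zero_le
      calc (∫⁻ t, L t ∂ν) ≤ liminf (fun k => ∫⁻ t, g k t ∂ν) atTop :=
            lintegral_liminf_le hgmeas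
        _ ≤ liminf (fun k => ENNReal.ofReal ((4 ^ n * 2 ^ s * 2 / γ ^ 2) * (δ k) ^ a)) atTop :=
            liminf_le_liminf (Eventually.of_forall hint)
        _ = 0 := hbound0.liminf_eq
    filter_upwards [(lintegral_eq_zero_iff hLmeas).1 hIL] with t ht
    exact le_antisymm ((hFL t).trans (le_of_eq ht)) zero_le
end
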